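/- Under Assumption (0 < τ < 2/‖A*A‖), suppose x^k ⇀ x* weakly where x* is a fixed point of J_τ ∘ G_τ, and j ∈ [N] satisfies x*_j = 0 and ‖∇φ₂(x*)_j‖₂ = 1. Then ‖G_τ(x*)_j‖₂ = τ, P_τ(G_τ(x^k)_j) → G_τ(x*)_j strongly implies that the rows converge strongly: x^k_j → 0 in ℓ²(Ω). -/

import Mathlib

open Filter
open scoped RealInnerProductSpace

variable {H0 K : Type*} [NormedAddCommGroup H0] [InnerProductSpace ℝ H0] [CompleteSpace H0]
  [NormedAddCommGroup K] [InnerProductSpace ℝ K] [CompleteSpace K]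

instance {N : ℕ} : CompleteSpace (PiLp 2 (fun _ : Fin N => H0)) :=
  inferInstance

/-!
Since `x*_j = 0`, `G_τ(x*)_j = -τ ∇φ₂(x*)_j`, whose norm is `τ`.
For the convergence, write `s_k = x^{k+1}_j = J_τ(G_τ(x^k)_j)` and `p_k = P_τ(G_τ(x^k)_j)`.
Soft thresholding and the projection onto the ball are parallel, and give
`⟪s_k, p_k⟫ = τ ‖s_k‖`. Splitting `p_k = (p_k - c) + c` with `c = G_τ(x*)_j` yields
`(τ - ‖p_k - c‖) ‖s_k‖ ≤ ⟪s_k, c⟫`; the left factor is eventually `≥ τ/2` by the strong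
convergence `p_k → c`, and the right side tends to `0` by the weak convergence `x^k_j ⇀ 0`.
-/

section Thresholding

variable {E : Type*} [NormedAddCommGroup E] [InnerProductSpace ℝ E]

/-- `softThreshold τ` and `ballProjection τ` are the paper's `J_τ` and `P_τ` on one row. -/
noncomputable def softThreshold (τ : ℝ) (z : E) : E :=
  (max (‖z‖ - τ) 0 / ‖z‖) • z

noncomputable def ballProjection (τ : ℝ) (z : E) : E :=
  if ‖z‖ ≤ τ then z else (τ / ‖z‖) • z

theorem inner_softThreshold_ballProjection {τ : ℝ} (hτ : 0 ≤ τ) (z : E) :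
    ⟪softThreshold τ z, ballProjection τ z⟫ = τ * ‖softThreshold τ z‖ := by
  unfold softThreshold ballProjection
  split_ifs with hz
  · simp [max_eq_right (sub_nonpos.mpr hz)]
  · have hz0 : 0 < ‖z‖ := hτ.trans_lt (not_le.mp hz)
    rw [max_eq_left (by linarith), real_inner_smul_left, real_inner_smul_right,
      real_inner_self_eq_norm_sq, norm_smul, Real.norm_of_nonneg (by bound)]
    field_simp

end Thresholding

theorem tendsto_zero_of_inner_eq_mul_norm {E : Type*} [NormedAddCommGroup E]
    [InnerProductSpace ℝ E] {τ : ℝ} (hτ : 0 < τ) {s p : ℕ → E} {c : E}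
    (hsp : ∀ k, ⟪s k, p k⟫ = τ * ‖s k‖) (hp : Tendsto p atTop (nhds c))
    (hsc : Tendsto (fun k => ⟪s k, c⟫) atTop (nhds 0)) :
    Tendsto s atTop (nhds 0) := by
  have hclose : ∀ᶠ k in atTop, ‖p k - c‖ ≤ τ / 2 :=
    (tendsto_iff_norm_sub_tendsto_zero.mp hp).eventually (eventually_le_nhds (by linarith))
  have hbound : ∀ᶠ k in atTop, ‖s k‖ ≤ 2 / τ * ⟪s k, c⟫ := hclose.mono fun k hk => by
    have hsplit : τ * ‖s k‖ = ⟪s k, p k - c⟫ + ⟪s k, c⟫ := by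
      rw [← hsp, ← inner_add_right, sub_add_cancel]
    have hcs : ⟪s k, p k - c⟫ ≤ ‖s k‖ * (τ / 2) :=
      (real_inner_le_norm _ _).trans (mul_le_mul_of_nonneg_left hk (norm_nonneg _))
    rw [div_mul_eq_mul_div, le_div_iff₀ hτ]
    linarith
  refine tendsto_zero_iff_norm_tendsto_zero.mpr
    (squeeze_zero' (Eventually.of_forall fun k => norm_nonneg _) hbound ?_)
  simpa using hsc.const_mul (2 / τ)

theorem PiLp.inner_single_right {𝕜 ι : Type*} [RCLike 𝕜] [Fintype ι] [DecidableEq ι]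
    {β : ι → Type*} [∀ i, NormedAddCommGroup (β i)] [∀ i, InnerProductSpace 𝕜 (β i)]
    (x : PiLp 2 β) (i : ι) (a : β i) :
    inner 𝕜 x (PiLp.single 2 i a) = inner 𝕜 (x i) a := by
  rw [PiLp.inner_apply, Finset.sum_eq_single i] <;> simp +contextual

theorem tendsto_inner_apply_of_tendsto_inner {ι : Type*} [Fintype ι] {β : ι → Type*}
    [∀ i, NormedAddCommGroup (β i)] [∀ i, InnerProductSpace ℝ (β i)]
    {x : ℕ → PiLp 2 β} {y : PiLp 2 β}
    (hweak : ∀ v : PiLp 2 β, Tendsto (fun k => ⟪x k, v⟫) atTop (nhds ⟪y, v⟫))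
    (i : ι) (a : β i) : Tendsto (fun k => ⟪x k i, a⟫) atTop (nhds ⟪y i, a⟫) := by
  classical
  simpa only [PiLp.inner_single_right] using hweak (PiLp.single 2 i a)

theorem stmt_16_general {N : ℕ} (A : PiLp 2 (fun _ : Fin N => H0) →L[ℝ] K) (u : K)
    (τ : ℝ) (hτ0 : 0 < τ)
    (G : PiLp 2 (fun _ : Fin N => H0) → PiLp 2 (fun _ : Fin N => H0))
    (hG : ∀ y, G y = y - τ • (ContinuousLinearMap.adjoint A) (A y - u))
    (P : H0 → H0)
    (hP : ∀ z : H0, P z = if ‖z‖ ≤ τ then z else (τ / ‖z‖) • z)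
    (xs : PiLp 2 (fun _ : Fin N => H0))
    (x : ℕ → PiLp 2 (fun _ : Fin N => H0))
    (hiter : ∀ (k : ℕ) (j : Fin N),
      x (k + 1) j = (max (‖G (x k) j‖ - τ) 0 / ‖G (x k) j‖) • G (x k) j)
    (hweak : ∀ y : PiLp 2 (fun _ : Fin N => H0),
      Tendsto (fun k => ⟪x k, y⟫) atTop (nhds ⟪xs, y⟫))
    (j : Fin N) (hj0 : xs j = 0)
    (hj1 : ‖(ContinuousLinearMap.adjoint A) (A xs - u) j‖ = 1) :
    ‖G xs j‖ = τ ∧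
      (Tendsto (fun k => P (G (x k) j)) atTop (nhds (G xs j)) →
        Tendsto (fun k => x k j) atTop (nhds (0 : H0))) := by
  have hGxs : G xs j = -(τ • (ContinuousLinearMap.adjoint A) (A xs - u) j) := by
    simp [hG xs, hj0]
  refine ⟨by rw [hGxs, norm_neg, norm_smul, hj1, Real.norm_of_nonneg hτ0.le, mul_one], ?_⟩
  intro hstrong
  refine (tendsto_add_atTop_iff_nat 1).mp (tendsto_zero_of_inner_eq_mul_norm hτ0 ?_ hstrong ?_)
  · intro k
    rw [hiter, hP]
    exact inner_softThreshold_ballProjection hτ0.le _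
  · have hweak_j := tendsto_inner_apply_of_tendsto_inner hweak j (G xs j)
    rw [hj0, inner_zero_left] at hweak_j
    exact hweak_j.comp (tendsto_add_atTop_nat 1)

/-- On `E \ supp(x*)`: if `x^k ⇀ x*` where `x*` is a fixed point of `J_τ ∘ G_τ`,
`x*_j = 0` and `‖∇φ₂(x*)_j‖ = 1`, then `‖G_τ(x*)_j‖ = τ`, and strong convergence
`P_τ(G_τ(x^k)_j) → G_τ(x*)_j` forces `x^k_j → 0` strongly. -/
theorem stmt_16 {N : ℕ} (A : PiLp 2 (fun _ : Fin N => H0) →L[ℝ] K) (u : K)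
    (τ : ℝ) (hτ0 : 0 < τ) (hτ2 : τ * ‖(ContinuousLinearMap.adjoint A).comp A‖ < 2)
    (G : PiLp 2 (fun _ : Fin N => H0) → PiLp 2 (fun _ : Fin N => H0))
    (hG : ∀ y, G y = y - τ • (ContinuousLinearMap.adjoint A) (A y - u))
    (P : H0 → H0)
    (hP : ∀ z : H0, P z = if ‖z‖ ≤ τ then z else (τ / ‖z‖) • z)
    (xs : PiLp 2 (fun _ : Fin N => H0))
    (hfix : ∀ j : Fin N, xs j = (max (‖G xs j‖ - τ) 0 / ‖G xs j‖) • G xs j)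
    (x : ℕ → PiLp 2 (fun _ : Fin N => H0))
    (hiter : ∀ (k : ℕ) (j : Fin N),
      x (k + 1) j = (max (‖G (x k) j‖ - τ) 0 / ‖G (x k) j‖) • G (x k) j)
    (hweak : ∀ y : PiLp 2 (fun _ : Fin N => H0),
      Tendsto (fun k => ⟪x k, y⟫) atTop (nhds ⟪xs, y⟫))
    (j : Fin N) (hj0 : xs j = 0)
    (hj1 : ‖(ContinuousLinearMap.adjoint A) (A xs - u) j‖ = 1) :
    ‖G xs j‖ = τ ∧
      (Tendsto (fun k => P (G (x k) j)) atTop (nhds (G xs j)) →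
        Tendsto (fun k => x k j) atTop (nhds (0 : H0))) :=
  stmt_16_general A u τ hτ0 G hG P hP xs x hiter hweak j hj0 hj1
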